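/- The terminal density for the step-plus-delta test function is φ* = (d+2)/2^{d+1} with optimal average kissing number Z* = d/2, in the sense that the small-k expansion S(k) = 1 + (Z − 2^d φ) + [2^{d−2}φ/(1+d/2) − Z/(2d)] k² + O(k⁴) has vanishing constant-order excess (Z = 2^d φ·d/(d+2) at crossover) and the condition S(0) = 1 − 2^{d+1}φ/(d+2) ≥ 0 forces φ ≤ (d+2)/2^{d+1}. -/
import Mathlib


open Real Asymptotics

/-- The Bessel function of the first kind of order `ν`, defined for `x > 0` by its
power series `J_ν(x) = (x/2)^ν ∑_{m≥0} (-1)^m / (m! Γ(ν+m+1)) (x/2)^{2m}`. -/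
noncomputable def besselJ (ν x : ℝ) : ℝ :=
  (x / 2) ^ ν *
    ∑' m : ℕ, (-1 : ℝ) ^ m / (m.factorial * Real.Gamma (ν + m + 1)) * (x / 2) ^ (2 * m)


noncomputable def bcoef (ν : ℝ) (m : ℕ) : ℝ := 1 / (m.factorial * Real.Gamma (ν + m + 1))

noncomputable def bterm (ν k : ℝ) (m : ℕ) : ℝ :=
  (-1 : ℝ) ^ m / (m.factorial * Real.Gamma (ν + m + 1)) * (k / 2) ^ (2 * m)


lemma gamma_arg_pos (ν : ℝ) (hν : -1 < ν) (m : ℕ) : 0 < ν + m + 1 := by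
  have : (0:ℝ) ≤ m := Nat.cast_nonneg m
  linarith

lemma bcoef_pos (ν : ℝ) (hν : -1 < ν) (m : ℕ) : 0 < bcoef ν m := by
  have h := Real.Gamma_pos_of_pos (gamma_arg_pos ν hν m)
  have hf : (0:ℝ) < m.factorial := by positivity
  unfold bcoef; positivity

lemma bcoef_succ (ν : ℝ) (hν : -1 < ν) (m : ℕ) :
    bcoef ν (m + 1) = bcoef ν m / ((m + 1) * (ν + m + 1)) := by
  have h1 : (ν + (m:ℝ) + 1) ≠ 0 := ne_of_gt (gamma_arg_pos ν hν m)
  have hG : Real.Gamma (ν + (m+1:ℕ) + 1) = (ν + m + 1) * Real.Gamma (ν + m + 1) := by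
    have : (ν + ((m:ℕ):ℝ) + 1) + 1 = ν + ((m+1:ℕ):ℝ) + 1 := by push_cast; ring
    rw [← this, Real.Gamma_add_one h1]
  have hGpos := Real.Gamma_pos_of_pos (gamma_arg_pos ν hν m)
  have hfpos : (0:ℝ) < m.factorial := by positivity
  unfold bcoef
  rw [hG, Nat.factorial_succ]
  push_cast
  field_simp

lemma bcoef_summable (ν : ℝ) (hν : -1 < ν) : Summable (bcoef ν) := by
  apply summable_of_ratio_norm_eventually_le (r := 1/2) (by norm_num)
  filter_upwards [Filter.eventually_ge_atTop 1] with m hm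
  have hpos := bcoef_pos ν hν m
  have hpos' := bcoef_pos ν hν (m+1)
  rw [Real.norm_eq_abs, Real.norm_eq_abs, abs_of_pos hpos', abs_of_pos hpos,
    bcoef_succ ν hν m]
  have h1 : (2:ℝ) ≤ (m:ℝ) + 1 := by exact_mod_cast Nat.succ_le_succ hm
  have h2 : (1:ℝ) ≤ ν + m + 1 := by
    have : (1:ℝ) ≤ (m:ℝ) := by exact_mod_cast hm
    linarith
  have hd : (0:ℝ) < ((m:ℝ)+1) * (ν + m + 1) := by nlinarith
  rw [div_le_iff₀ hd]
  have h3 : (2:ℝ) ≤ ((m:ℝ)+1) * (ν + m + 1) := by nlinarith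
  nlinarith [mul_le_mul_of_nonneg_left h3 hpos.le]

lemma bterm_abs_le (ν k : ℝ) (hν : -1 < ν) (hk : |k| ≤ 2) (m : ℕ) :
    |bterm ν k m| ≤ bcoef ν m := by
  have hGpos := Real.Gamma_pos_of_pos (gamma_arg_pos ν hν m)
  have hfpos : (0:ℝ) < m.factorial := by positivity
  unfold bterm bcoef
  rw [abs_mul, abs_div, abs_pow, abs_neg, abs_one, one_pow,
    abs_of_pos (by positivity : (0:ℝ) < (m.factorial : ℝ) * Real.Gamma (ν + m + 1))]
  have h1 : |k/2| ≤ 1 := by rw [abs_div]; simp; linarith [abs_nonneg k]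
  calc 1 / ((m.factorial : ℝ) * Real.Gamma (ν + m + 1)) * |(k/2)^(2*m)|
      ≤ 1 / ((m.factorial : ℝ) * Real.Gamma (ν + m + 1)) * 1 := by
        apply mul_le_mul_of_nonneg_left _ (by positivity)
        rw [abs_pow]; exact pow_le_one₀ (abs_nonneg _) h1
    _ = 1 / ((m.factorial : ℝ) * Real.Gamma (ν + m + 1)) := mul_one _

lemma bterm_summable (ν k : ℝ) (hν : -1 < ν) (hk : |k| ≤ 2) : Summable (bterm ν k) := by
  apply Summable.of_norm
  apply Summable.of_nonneg_of_le (fun m => norm_nonneg _) _ (bcoef_summable ν hν)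
  intro m
  simpa [Real.norm_eq_abs] using bterm_abs_le ν k hν hk m

lemma bterm_tail_abs_le (ν k : ℝ) (hν : -1 < ν) (hk0 : 0 < k) (hk2 : k ≤ 2) (m : ℕ) :
    |bterm ν k (m + 2)| ≤ bcoef ν (m + 2) * (k / 2) ^ 4 := by
  have hGpos := Real.Gamma_pos_of_pos (gamma_arg_pos ν hν (m + 2))
  have hfpos : (0:ℝ) < (m + 2).factorial := by positivity
  have hk1 : k / 2 ≤ 1 := by linarith
  have hknn : (0:ℝ) ≤ k / 2 := by linarith
  have habs : |bterm ν k (m + 2)| = bcoef ν (m + 2) * (k / 2) ^ (2 * (m + 2)) := by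
    have hD : (0:ℝ) < ((m+2).factorial : ℝ) * Real.Gamma (ν + (m+2:ℕ) + 1) := by positivity
    unfold bterm bcoef
    simp [abs_mul, abs_div, abs_pow, abs_of_nonneg hknn, abs_of_pos hD]
    exact Or.inl (Or.inl (Real.Gamma_pos_of_pos (by push_cast; push_cast at hGpos; linarith)).le)
  rw [habs]
  have hsplit : (k / 2) ^ (2 * (m + 2)) = (k / 2) ^ (2 * m) * (k / 2) ^ 4 := by
    rw [show 2 * (m + 2) = 2 * m + 4 by ring, pow_add]
  rw [hsplit]
  have hle : (k / 2) ^ (2 * m) ≤ 1 := pow_le_one₀ hknn hk1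
  have h0 : (0:ℝ) < bcoef ν (m + 2) := bcoef_pos ν hν (m + 2)
  nlinarith [pow_nonneg hknn 4, pow_nonneg hknn (2*m), mul_le_mul_of_nonneg_right hle (pow_nonneg hknn 4)]

lemma tail_bound (ν : ℝ) (hν : -1 < ν) {k : ℝ} (hk0 : 0 < k) (hk2 : k ≤ 2) :
    |(∑' m, bterm ν k m) - (bterm ν k 0 + bterm ν k 1)| ≤
      (∑' m, bcoef ν (m + 2)) * (k / 2) ^ 4 := by
  have hka : |k| ≤ 2 := by rw [abs_of_pos hk0]; exact hk2
  have hsum := bterm_summable ν k hν hka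
  have hsum2 : Summable fun m => bterm ν k (m + 2) := (summable_nat_add_iff 2).mpr hsum
  have hC : Summable fun m => bcoef ν (m + 2) := (summable_nat_add_iff 2).mpr (bcoef_summable ν hν)
  have h0 : (∑' m, bterm ν k m) - (bterm ν k 0 + bterm ν k 1) = ∑' m, bterm ν k (m + 2) := by
    rw [← Summable.sum_add_tsum_nat_add 2 hsum]
    rw [Finset.sum_range_succ, Finset.sum_range_one]; ring
  rw [h0]
  have habs : Summable fun m => |bterm ν k (m + 2)| := hsum2.abs
  have hg : Summable fun m => bcoef ν (m + 2) * (k / 2) ^ 4 := hC.mul_right ((k / 2) ^ 4)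
  have s1 : |∑' m, bterm ν k (m + 2)| ≤ ∑' m, |bterm ν k (m + 2)| := by
    simpa [Real.norm_eq_abs] using
      norm_tsum_le_tsum_norm (f := fun m => bterm ν k (m + 2))
        (by simpa [Real.norm_eq_abs] using habs)
  have s2 : ∑' m, |bterm ν k (m + 2)| ≤ ∑' m, bcoef ν (m + 2) * (k / 2) ^ 4 :=
    Summable.tsum_le_tsum (fun m => bterm_tail_abs_le ν k hν hk0 hk2 m) habs hg
  have s3 : ∑' m, bcoef ν (m + 2) * (k / 2) ^ 4 = (∑' m, bcoef ν (m + 2)) * (k / 2) ^ 4 :=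
    tsum_mul_right
  linarith

lemma tailO (ν : ℝ) (hν : -1 < ν) :
    (fun k : ℝ => (∑' m, bterm ν k m) - (bterm ν k 0 + bterm ν k 1))
      =O[nhdsWithin 0 (Set.Ioi 0)] fun k : ℝ => k ^ 4 := by
  apply IsBigO.of_bound ((∑' m, bcoef ν (m + 2)) / 16)
  filter_upwards [Ioo_mem_nhdsGT_of_mem (by norm_num : (0:ℝ) ∈ Set.Ico 0 2)] with k hk
  have hb := tail_bound ν hν hk.1 hk.2.le
  rw [Real.norm_eq_abs, Real.norm_eq_abs, abs_pow, abs_of_pos hk.1]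
  calc |(∑' m, bterm ν k m) - (bterm ν k 0 + bterm ν k 1)|
      ≤ (∑' m, bcoef ν (m + 2)) * (k / 2) ^ 4 := hb
    _ = (∑' m, bcoef ν (m + 2)) / 16 * k ^ 4 := by ring

lemma besselJ_eq (ν k : ℝ) : besselJ ν k = (k / 2) ^ ν * ∑' m, bterm ν k m := rfl

lemma bterm_zero (ν k : ℝ) : bterm ν k 0 = 1 / Real.Gamma (ν + 1) := by
  unfold bterm; norm_num

lemma bterm_one (ν k : ℝ) : bterm ν k 1 = -(1 / Real.Gamma (ν + 2)) * (k / 2) ^ 2 := by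
  unfold bterm
  norm_num
  rw [show ν + 1 + 1 = ν + 2 by ring]
  ring


/-- Terminal density for the step-plus-delta test function: with `ν = d/2` and the
structure factor
`S(k) = 1 - (φ 2^{3ν} Γ(1+ν)/k^ν) J_ν(k) + (Z 2^ν Γ(1+ν)/(d k^{ν-1})) J_{ν-1}(k)`,
the small-`k` expansion is
`S(k) = 1 + (Z - 2^d φ) + [2^{d-2} φ/(1+d/2) - Z/(2d)] k² + O(k⁴)`; at the crossover
`Z = 2^d φ d/(d+2)` one has `S(0) = 1 - 2^{d+1} φ/(d+2)`, and the condition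
`S(0) ≥ 0` forces `φ ≤ (d+2)/2^{d+1}`, with `Z = d/2` at equality, i.e.
`φ* = (d+2)/2^{d+1}` and `Z* = d/2`. -/
theorem step_plus_delta_terminal_density (d : ℕ) (hd : 1 ≤ d)
    (ν φ Z : ℝ) (hν : ν = d / 2) (hφ : 0 ≤ φ)
    (S : ℝ → ℝ)
    (hS : ∀ k : ℝ, 0 < k → S k =
      1 - φ * (2 : ℝ) ^ (3 * ν) * Real.Gamma (1 + ν) / k ^ ν * besselJ ν k +
        Z * (2 : ℝ) ^ ν * Real.Gamma (1 + ν) / (d * k ^ (ν - 1)) * besselJ (ν - 1) k)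
    (hZ : Z = 2 ^ d * φ * d / (d + 2)) :
    (1 + (Z - 2 ^ d * φ) = 1 - 2 ^ (d + 1) * φ / (d + 2)) ∧
      (0 ≤ 1 + (Z - 2 ^ d * φ) → φ ≤ (d + 2) / 2 ^ (d + 1)) ∧
      (φ = (d + 2) / 2 ^ (d + 1) → Z = d / 2) ∧
      (fun k : ℝ => S k -
          (1 + (Z - 2 ^ d * φ) +
            ((2 : ℝ) ^ ((d : ℝ) - 2) * φ / (1 + d / 2) - Z / (2 * d)) * k ^ 2))
        =O[nhdsWithin 0 (Set.Ioi 0)] fun k : ℝ => k ^ 4 := by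
  have hd0 : (0:ℝ) < d := by exact_mod_cast hd
  have hd2 : (0:ℝ) < (d:ℝ) + 2 := by linarith
  have hp : (0:ℝ) < (2:ℝ) ^ (d+1) := by positivity
  refine ⟨?_, ?_, ?_, ?_⟩
  · rw [hZ]; field_simp; ring
  · intro h
    rw [hZ] at h
    have h2 := mul_nonneg h hd2.le
    have e : (1 + ((2:ℝ) ^ d * φ * (d:ℝ) / ((d:ℝ) + 2) - 2 ^ d * φ)) * ((d:ℝ) + 2)
        = ((d:ℝ) + 2) - 2 ^ (d + 1) * φ := by
      field_simp
      ring
    rw [e] at h2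
    rw [le_div_iff₀ hp]
    nlinarith
  · intro hφe
    rw [hZ, hφe]
    have h2 : ((2:ℝ)^(d+1)) = 2 * 2^d := by ring
    field_simp [h2]
    ring
  · -- the big-O part
    have hν0 : 0 < ν := by rw [hν]; positivity
    have hνm1 : -1 < ν := by linarith
    have hνm1' : -1 < ν - 1 := by
      have h1 : (1:ℝ) ≤ d := by exact_mod_cast hd
      rw [hν]; linarith
    set G := Real.Gamma (1 + ν) with hG
    have key : ∀ k : ℝ, 0 < k →
        S k - (1 + (Z - 2 ^ d * φ) +
            ((2 : ℝ) ^ ((d : ℝ) - 2) * φ / (1 + d / 2) - Z / (2 * d)) * k ^ 2)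
        = (-(φ * 2 ^ d * G)) * ((∑' m, bterm ν k m) - (bterm ν k 0 + bterm ν k 1))
          + (2 * Z * G / d) * ((∑' m, bterm (ν-1) k m) - (bterm (ν-1) k 0 + bterm (ν-1) k 1)) := by
      intro k hk
      have hk2 : (0:ℝ) < k ^ ν := Real.rpow_pos_of_pos hk ν
      have hk3 : (0:ℝ) < k ^ (ν - 1) := Real.rpow_pos_of_pos hk (ν - 1)
      have h2ν : (0:ℝ) < (2:ℝ) ^ ν := Real.rpow_pos_of_pos two_pos ν
      have h2ν1 : (0:ℝ) < (2:ℝ) ^ (ν-1) := Real.rpow_pos_of_pos two_pos (ν-1)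
      have e1 : φ * (2:ℝ) ^ (3 * ν) * G / k ^ ν * besselJ ν k
          = φ * 2 ^ d * G * ∑' m, bterm ν k m := by
        rw [besselJ_eq, Real.div_rpow hk.le (by norm_num) ν]
        have h3 : (2:ℝ) ^ (3 * ν) = 2 ^ ν * (2:ℝ) ^ (d:ℝ) := by
          rw [← Real.rpow_add two_pos]; congr 1; rw [hν]; ring
        rw [h3, Real.rpow_natCast]
        field_simp
      have e2 : Z * (2:ℝ) ^ ν * G / (d * k ^ (ν - 1)) * besselJ (ν-1) k
          = 2 * Z * G / d * ∑' m, bterm (ν-1) k m := by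
        rw [besselJ_eq, Real.div_rpow hk.le (by norm_num) (ν-1)]
        have h3 : (2:ℝ) ^ ν = 2 * (2:ℝ) ^ (ν - 1) := by
          rw [show ν = (ν - 1) + 1 by ring]
          rw [Real.rpow_add two_pos, Real.rpow_one]
          ring_nf
        rw [h3]
        field_simp
      rw [hS k hk, e1, e2, bterm_zero, bterm_zero, bterm_one, bterm_one]
      -- Gamma relations
      have hGν : Real.Gamma (ν + 1) = ν * Real.Gamma ν := Real.Gamma_add_one hν0.ne'
      have hGν2 : Real.Gamma (ν + 2) = (ν + 1) * Real.Gamma (ν + 1) := by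
        rw [show ν + 2 = (ν + 1) + 1 by ring, Real.Gamma_add_one (by linarith)]
      have hG1 : G = Real.Gamma (ν + 1) := by rw [hG, add_comm]
      have hν1m : ν - 1 + 1 = ν := by ring
      have hν1m2 : ν - 1 + 2 = ν + 1 := by ring
      have hGpos : 0 < Real.Gamma ν := Real.Gamma_pos_of_pos hν0
      have h2d2 : (2:ℝ) ^ ((d:ℝ) - 2) = 2 ^ d / 4 := by
        rw [Real.rpow_sub two_pos, Real.rpow_natCast]
        norm_num
      rw [hν1m, hν1m2, hG1, hGν2, hGν, h2d2, hν]
      have hdne : (d:ℝ) ≠ 0 := hd0.ne'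
      have h1 : (d:ℝ)/2 ≠ 0 := by positivity
      have h2 : (d:ℝ)/2 + 1 ≠ 0 := by positivity
      have h3 : (1:ℝ) + d/2 ≠ 0 := by positivity
      field_simp
      ring
    have hO : (fun k : ℝ =>
        (-(φ * 2 ^ d * G)) * ((∑' m, bterm ν k m) - (bterm ν k 0 + bterm ν k 1))
          + (2 * Z * G / d) * ((∑' m, bterm (ν-1) k m) - (bterm (ν-1) k 0 + bterm (ν-1) k 1)))
        =O[nhdsWithin 0 (Set.Ioi 0)] fun k : ℝ => k ^ 4 :=
      ((tailO ν hνm1).const_mul_left _).add ((tailO (ν-1) hνm1').const_mul_left _)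
    refine hO.congr' ?_ (Filter.EventuallyEq.refl _ _)
    filter_upwards [self_mem_nhdsWithin] with k hk
    exact (key k hk).symm
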